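/- Let 𝐋 be a ℂ-linear functional on the space of Laurent polynomials over ℂ such that 𝐋(1) = 1 and 𝐋(R_n · R_m) = 0 whenever n ≠ m (n, m ≥ 0). Let c > 0 satisfy c² < ρ and f(w) ≠ 0 for all w ∈ ℂ with |w| ≤ c². Then for every Laurent polynomial R, 𝐋(R) = (1/(2πi)) · ∮_{|y| = c} R(y²) / (y · f(y²)) dy, where the contour integral is over the circle of radius c centered at 0, traversed counterclockwise. -/

import Mathlib

open scoped ENNReal NNReal Real

/-- The orthogonal Laurent polynomials associated with the partial sums of the power
series `∑ d_k z^k`: `R_{2n} = ∑_{k=0}^{2n} d_k T^{k−n}`,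
`R_{2n+1} = ∑_{k=0}^{2n+1} d_k T^{k−n−1}` (the shift being `(n+1)/2` in ℕ-division). -/
noncomputable def Rlp (d : ℕ → ℂ) (n : ℕ) : LaurentPolynomial ℂ :=
  ∑ k ∈ Finset.range (n + 1),
    LaurentPolynomial.C (d k) * LaurentPolynomial.T ((k : ℤ) - (((n + 1) / 2 : ℕ) : ℤ))

/-- Evaluation of a Laurent polynomial at a (nonzero) complex number. -/
noncomputable def leval (y : ℂ) (p : LaurentPolynomial ℂ) : ℂ :=
  p.coeff.sum fun n a => a * y ^ n

/-!
Both sides of the identity are linear in `R`, and since every `d k` is nonzero the `R_m` are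
"triangular" in the monomials `T^e`, so they span all Laurent polynomials; it suffices to take
`R = R_m`. Orthogonality against `R_0 = 1` gives `𝐋(R_m) = δ_{m0}`. On the other side, with
`s = ⌊(m+1)/2⌋` we have `R_m(y²) = f_m(y²) / y^{2s}` and `f_m(w) = f(w) - w^{m+1} g(w)` for a
power series `g` converging on the same disc, so on the circle the integrand is
`y^{-2s-1} - y^{2m+1-2s} g(y²)/f(y²)`. The second term is holomorphic on the closed disc
(`2s ≤ m + 1` and `f(y²) ≠ 0` there), so only `y^{-2s-1}` contributes, and it contributes `2πi`
exactly when `s = 0`, i.e. `m = 0`.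
-/

open LaurentPolynomial hiding leval
open Metric Finset Complex

section Evaluation

noncomputable def levalₗ (y : ℂ) : LaurentPolynomial ℂ →ₗ[ℂ] ℂ :=
  (Finsupp.linearCombination ℂ fun n : ℤ => y ^ n) ∘ₗ
    (AddMonoidAlgebra.coeffLinearEquiv ℂ).toLinearMap

@[simp] theorem levalₗ_apply (y : ℂ) (p : LaurentPolynomial ℂ) : levalₗ y p = leval y p := rfl

theorem leval_C_mul_T (y a : ℂ) (n : ℤ) : leval y (C a * T n) = a * y ^ n := by
  rw [← single_eq_C_mul_T]
  exact Finsupp.sum_single_index (zero_mul _)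

theorem leval_Rlp (d : ℕ → ℂ) (m : ℕ) {y : ℂ} (hy : y ≠ 0) :
    leval y (Rlp d m) = (∑ k ∈ range (m + 1), d k * y ^ k) / y ^ ((m + 1) / 2) := by
  rw [Rlp, ← levalₗ_apply, map_sum, sum_div]
  refine sum_congr rfl fun k _ => ?_
  rw [levalₗ_apply, leval_C_mul_T, zpow_sub₀ hy, zpow_natCast, zpow_natCast, mul_div_assoc]

theorem continuousOn_leval (p : LaurentPolynomial ℂ) : ContinuousOn (fun y => leval y p) {0}ᶜ := by
  simp only [leval, Finsupp.sum]
  exact continuousOn_finsetSum _ fun n _ =>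
    continuousOn_const.mul (continuousOn_id.zpow₀ n fun y hy => Or.inl hy)

end Evaluation

section Span

theorem Submodule.mem_of_sum_smul_mem {K M ι : Type*} [DivisionRing K] [AddCommGroup M]
    [Module K M] [DecidableEq ι] {S : Submodule K M} {s : Finset ι} {a : ι → K} {v : ι → M}
    {i : ι} (hsum : ∑ j ∈ s, a j • v j ∈ S) (hi : i ∈ s) (ha : a i ≠ 0)
    (hrest : ∀ j ∈ s, j ≠ i → v j ∈ S) : v i ∈ S := by
  rw [← add_sum_erase s _ hi] at hsum
  have hrest' : ∑ j ∈ s.erase i, a j • v j ∈ S := S.sum_mem fun j hj =>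
    S.smul_mem _ (hrest j (mem_of_mem_erase hj) (ne_of_mem_erase hj))
  exact (S.smul_mem_iff ha).1 ((S.add_mem_iff_left hrest').1 hsum)

variable {d : ℕ → ℂ}

theorem Rlp_eq_sum_smul (m : ℕ) :
    Rlp d m = ∑ k ∈ range (m + 1), d k • T ((k : ℤ) - ((m + 1) / 2 : ℕ)) := by
  simp only [Rlp, smul_eq_C_mul]

theorem T_mem_span_Rlp_of_forall_ne (hd : ∀ k, d k ≠ 0) {m k₀ : ℕ} (hk₀ : k₀ ≤ m)
    (hrest : ∀ k ≤ m, k ≠ k₀ → T ((k : ℤ) - ((m + 1) / 2 : ℕ)) ∈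
      Submodule.span ℂ (Set.range (Rlp d))) :
    T ((k₀ : ℤ) - ((m + 1) / 2 : ℕ)) ∈ Submodule.span ℂ (Set.range (Rlp d)) := by
  have hR : Rlp d m ∈ Submodule.span ℂ (Set.range (Rlp d)) := Submodule.subset_span ⟨m, rfl⟩
  rw [Rlp_eq_sum_smul] at hR
  refine Submodule.mem_of_sum_smul_mem (a := d) hR (mem_range.2 (Nat.lt_succ_of_le hk₀)) (hd k₀)
    fun k hk hne => hrest k (Nat.le_of_lt_succ (mem_range.1 hk)) hne

/-- The exponents of `Rlp d m` fill the interval `[-(m+1)/2, m - (m+1)/2]`, which grows by one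
endpoint from `m` to `m + 1`. -/
theorem T_mem_span_Rlp (hd : ∀ k, d k ≠ 0) (m : ℕ) (e : ℤ) (he₁ : -(((m + 1) / 2 : ℕ) : ℤ) ≤ e)
    (he₂ : e ≤ m - ((m + 1) / 2 : ℕ)) : T e ∈ Submodule.span ℂ (Set.range (Rlp d)) := by
  induction m generalizing e with
  | zero =>
    obtain rfl : e = (0 : ℕ) - ((0 + 1) / 2 : ℕ) := by omega
    exact T_mem_span_Rlp_of_forall_ne hd le_rfl fun k hk hne => absurd (by omega) hne
  | succ m ih =>
    by_cases hold : -(((m + 1) / 2 : ℕ) : ℤ) ≤ e ∧ e ≤ m - ((m + 1) / 2 : ℕ)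
    · exact ih e hold.1 hold.2
    obtain ⟨k₀, rfl⟩ : ∃ k₀ : ℕ, e = k₀ - ((m + 1 + 1) / 2 : ℕ) :=
      ⟨(e + ((m + 1 + 1) / 2 : ℕ)).toNat, by omega⟩
    exact T_mem_span_Rlp_of_forall_ne hd (by omega) fun k hk hne => ih _ (by omega) (by omega)

theorem span_range_Rlp (hd : ∀ k, d k ≠ 0) : Submodule.span ℂ (Set.range (Rlp d)) = ⊤ := by
  refine Submodule.eq_top_iff'.2 fun p => ?_
  induction p using LaurentPolynomial.induction_on' with
  | add p q hp hq => exact Submodule.add_mem _ hp hq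
  | C_mul_T n a =>
    rw [← smul_eq_C_mul]
    exact Submodule.smul_mem _ a (T_mem_span_Rlp hd (2 * n.natAbs) n (by omega) (by omega))

end Span

section PowerSeries

variable {a : ℕ → ℂ}

theorem summable_shift_mul_pow {w : ℂ} (n : ℕ) (h : Summable fun k => a k * w ^ k) :
    Summable fun i => a (i + n) * w ^ i := by
  rcases eq_or_ne w 0 with rfl | hw
  · exact summable_of_ne_finset_zero (s := {0}) fun i hi => by simp_all
  · refine (((summable_nat_add_iff n).2 h).mul_left (w ^ n)⁻¹).congr fun i => ?_
    field_simp
    ring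

theorem tsum_mul_pow_eq_sum_add_pow_mul_tsum {w : ℂ} (n : ℕ) (h : Summable fun k => a k * w ^ k) :
    ∑' k, a k * w ^ k = ∑ k ∈ range n, a k * w ^ k + w ^ n * ∑' i, a (i + n) * w ^ i := by
  rw [← h.sum_add_tsum_nat_add n, ← tsum_mul_left]
  congr 1
  exact tsum_congr fun i => by ring

theorem le_radius_ofScalars {ρ : ℝ≥0∞}
    (h : ∀ w : ℂ, (‖w‖₊ : ℝ≥0∞) < ρ → Summable fun k => a k * w ^ k) :
    ρ ≤ (FormalMultilinearSeries.ofScalars ℂ a).radius := by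
  refine ENNReal.le_of_forall_nnreal_lt fun r hr => ?_
  have hs := h r (by simpa using hr)
  refine (FormalMultilinearSeries.ofScalars ℂ a).le_radius_of_tendsto (l := 0) ?_
  simpa [FormalMultilinearSeries.ofScalars_norm] using hs.tendsto_atTop_zero.norm

theorem differentiableOn_tsum_mul_pow {ρ : ℝ≥0∞}
    (h : ∀ w : ℂ, (‖w‖₊ : ℝ≥0∞) < ρ → Summable fun k => a k * w ^ k) :
    DifferentiableOn ℂ (fun w => ∑' k, a k * w ^ k) (eball 0 ρ) := by
  set p := FormalMultilinearSeries.ofScalars ℂ a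
  have hp : p.sum = fun w => ∑' k, a k * w ^ k := FormalMultilinearSeries.ofScalarsSum_eq_tsum a
  rcases eq_zero_or_pos p.radius with h0 | hpos
  · have hρ : ρ = 0 := nonpos_iff_eq_zero.1 (h0 ▸ le_radius_ofScalars h)
    simp only [hρ, eball_zero, differentiableOn_empty]
  · rw [← hp]
    exact (p.hasFPowerSeriesOnBall hpos).differentiableOn.mono
      (eball_subset_eball (le_radius_ofScalars h))

end PowerSeries

section Contour

variable {c : ℝ}

theorem continuousOn_leval_sq (p : LaurentPolynomial ℂ) (hc : 0 < c) :
    ContinuousOn (fun y => leval (y ^ 2) p) (sphere 0 c) :=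
  (continuousOn_leval p).comp (continuousOn_pow 2) fun _ hy =>
    pow_ne_zero 2 (ne_zero_of_mem_sphere hc.ne' ⟨_, hy⟩)

noncomputable def circleFunctional (c : ℝ) (h : ℂ → ℂ) (hc : 0 < c)
    (hh : ContinuousOn h (sphere 0 c)) (hh0 : ∀ y ∈ sphere (0 : ℂ) c, h y ≠ 0) :
    LaurentPolynomial ℂ →ₗ[ℂ] ℂ where
  toFun p := ∮ y in C(0, c), leval (y ^ 2) p / h y
  map_add' p q := by
    have hint : ∀ p, CircleIntegrable (fun y => leval (y ^ 2) p / h y) 0 c := fun p =>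
      ((continuousOn_leval_sq p hc).div hh hh0).circleIntegrable hc.le
    simp only [← levalₗ_apply, map_add, add_div]
    exact circleIntegral.integral_add (hint p) (hint q)
  map_smul' a p := by
    simp only [← levalₗ_apply, map_smul, smul_eq_mul, mul_div_assoc, RingHom.id_apply]
    exact circleIntegral.integral_smul a _ 0 c

@[simp] theorem circleFunctional_apply (h : ℂ → ℂ) (hc : 0 < c) (hh : ContinuousOn h (sphere 0 c))
    (hh0 : ∀ y ∈ sphere (0 : ℂ) c, h y ≠ 0) (p : LaurentPolynomial ℂ) :
    circleFunctional c h hc hh hh0 p = ∮ y in C(0, c), leval (y ^ 2) p / h y :=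
  rfl

variable {ρ : ℝ≥0∞}

theorem norm_sq_le_of_mem_closedBall {y : ℂ} (hy : y ∈ closedBall 0 c) : ‖y ^ 2‖ ≤ c ^ 2 := by
  rw [norm_pow]
  exact pow_le_pow_left₀ (norm_nonneg y) (mem_closedBall_zero_iff.1 hy) 2

theorem nnnorm_sq_lt_of_mem_closedBall (hcρ : ENNReal.ofReal (c ^ 2) < ρ) {y : ℂ}
    (hy : y ∈ closedBall 0 c) : (‖y ^ 2‖₊ : ℝ≥0∞) < ρ := by
  rw [← enorm_eq_nnnorm, ← ofReal_norm]
  exact (ENNReal.ofReal_le_ofReal (norm_sq_le_of_mem_closedBall hy)).trans_lt hcρ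

theorem DifferentiableOn.differentiableAt_comp_sq {f : ℂ → ℂ}
    (hf : DifferentiableOn ℂ f (eball 0 ρ)) (hcρ : ENNReal.ofReal (c ^ 2) < ρ) {y : ℂ}
    (hy : y ∈ closedBall 0 c) : DifferentiableAt ℂ (fun y => f (y ^ 2)) y :=
  (hf.differentiableAt (isOpen_eball.mem_nhds (by
    rw [mem_eball, edist_zero_right]; exact nnnorm_sq_lt_of_mem_closedBall hcρ hy))).comp y
    (differentiableAt_pow 2)

variable {d : ℕ → ℂ}

theorem leval_sq_Rlp_div_eq {m j : ℕ} (hj : j + 2 * ((m + 1) / 2) + 1 = 2 * (m + 1)) {y : ℂ}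
    (hy : y ≠ 0) (hsum : Summable fun k => d k * (y ^ 2) ^ k) (hF : ∑' k, d k * (y ^ 2) ^ k ≠ 0) :
    leval (y ^ 2) (Rlp d m) / (y * ∑' k, d k * (y ^ 2) ^ k) =
      y ^ (-(2 * ((m + 1) / 2) + 1 : ℕ) : ℤ) -
        y ^ j * ((∑' i, d (i + (m + 1)) * (y ^ 2) ^ i) / ∑' k, d k * (y ^ 2) ^ k) := by
  have hpow : (y ^ 2) ^ (m + 1) = y ^ j * y ^ (2 * ((m + 1) / 2) + 1) := by
    rw [← pow_mul, ← pow_add, ← add_assoc, hj]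
  rw [leval_Rlp d m (pow_ne_zero 2 hy),
    eq_sub_of_add_eq (tsum_mul_pow_eq_sum_add_pow_mul_tsum (m + 1) hsum).symm, hpow, zpow_neg,
    zpow_natCast]
  field_simp
  ring

theorem circleIntegral_leval_sq_Rlp_div
    (hconv : ∀ w : ℂ, (‖w‖₊ : ℝ≥0∞) < ρ → Summable fun k => d k * w ^ k)
    (hc : 0 < c) (hcρ : ENNReal.ofReal (c ^ 2) < ρ)
    (hfz : ∀ w : ℂ, ‖w‖ ≤ c ^ 2 → (∑' k, d k * w ^ k) ≠ 0) (m : ℕ) :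
    (∮ y in C(0, c), leval (y ^ 2) (Rlp d m) / (y * ∑' k, d k * (y ^ 2) ^ k)) =
      if m = 0 then 2 * π * I else 0 := by
  set s := (m + 1) / 2
  obtain ⟨j, hj⟩ : ∃ j, j + 2 * s + 1 = 2 * (m + 1) := ⟨2 * (m + 1) - 2 * s - 1, by omega⟩
  have hF0 : ∀ y ∈ closedBall (0 : ℂ) c, ∑' k, d k * (y ^ 2) ^ k ≠ 0 := fun y hy =>
    hfz _ (norm_sq_le_of_mem_closedBall hy)
  have hF := differentiableOn_tsum_mul_pow hconv
  have hg := differentiableOn_tsum_mul_pow fun w hw => summable_shift_mul_pow (m + 1) (hconv w hw)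
  have hG : DiffContOnCl ℂ (fun y => y ^ j *
      ((∑' i, d (i + (m + 1)) * (y ^ 2) ^ i) / ∑' k, d k * (y ^ 2) ^ k)) (ball 0 c) := by
    refine DifferentiableOn.diffContOnCl fun y hy => ?_
    rw [closure_ball 0 hc.ne'] at hy
    exact ((differentiableAt_pow j).mul ((hg.differentiableAt_comp_sq hcρ hy).div
      (hF.differentiableAt_comp_sq hcρ hy) (hF0 y hy))).differentiableWithinAt
  have hsplit : Set.EqOn (fun y => leval (y ^ 2) (Rlp d m) / (y * ∑' k, d k * (y ^ 2) ^ k))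
      (fun y => (y - 0) ^ (-(2 * s + 1 : ℕ) : ℤ) - y ^ j *
        ((∑' i, d (i + (m + 1)) * (y ^ 2) ^ i) / ∑' k, d k * (y ^ 2) ^ k)) (sphere 0 c) := by
    intro y hy
    simp only [sub_zero]
    exact leval_sq_Rlp_div_eq hj (ne_zero_of_mem_sphere hc.ne' ⟨y, hy⟩)
      (hconv _ (nnnorm_sq_lt_of_mem_closedBall hcρ (sphere_subset_closedBall hy)))
      (hF0 y (sphere_subset_closedBall hy))
  have hint : CircleIntegrable (fun y => (y - 0) ^ (-(2 * s + 1 : ℕ) : ℤ)) 0 c := by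
    refine circleIntegrable_sub_zpow_iff.2 (Or.inr (Or.inr ?_))
    simp [abs_of_pos hc, hc.ne]
  rw [circleIntegral.integral_congr hc.le hsplit, circleIntegral.integral_sub hint
    ((hG.continuousOn_ball.mono sphere_subset_closedBall).circleIntegrable hc.le),
    hG.circleIntegral_eq_zero hc.le, sub_zero]
  split_ifs with hm
  · have hs0 : s = 0 := by omega
    simpa [hs0] using circleIntegral.integral_sub_inv_of_mem_ball (mem_ball_self (x := (0 : ℂ)) hc)
  · exact circleIntegral.integral_sub_zpow_of_ne (by omega) 0 0 c

end Contour

theorem apply_Rlp_of_orthogonal {d : ℕ → ℂ} (hd0 : d 0 = 1) {L : LaurentPolynomial ℂ →ₗ[ℂ] ℂ}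
    (hL1 : L 1 = 1) (horth : ∀ n m : ℕ, n ≠ m → L (Rlp d n * Rlp d m) = 0) (m : ℕ) :
    L (Rlp d m) = if m = 0 then 1 else 0 := by
  have hR0 : Rlp d 0 = 1 := by simp [Rlp, hd0]
  split_ifs with hm
  · rw [hm, hR0, hL1]
  · simpa [hR0] using horth 0 m (Ne.symm hm)

theorem stmt_6_general (d : ℕ → ℂ) (hd0 : d 0 = 1) (hdk : ∀ k, d k ≠ 0)
    (ρ : ℝ≥0∞)
    (hconv : ∀ w : ℂ, (‖w‖₊ : ℝ≥0∞) < ρ → Summable (fun k => d k * w ^ k))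
    (L : LaurentPolynomial ℂ →ₗ[ℂ] ℂ) (hL1 : L 1 = 1)
    (horth : ∀ n m : ℕ, n ≠ m → L (Rlp d n * Rlp d m) = 0)
    (c : ℝ) (hc : 0 < c) (hcρ : ENNReal.ofReal (c ^ 2) < ρ)
    (hfz : ∀ w : ℂ, ‖w‖ ≤ c ^ 2 → (∑' k, d k * w ^ k) ≠ 0)
    (R : LaurentPolynomial ℂ) :
    L R = (2 * ↑π * Complex.I)⁻¹ *
      ∮ y in C(0, c), leval (y ^ 2) R / (y * ∑' k, d k * (y ^ 2) ^ k) := by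
  have hdiff : ∀ y ∈ closedBall (0 : ℂ) c,
      DifferentiableAt ℂ (fun y => y * ∑' k, d k * (y ^ 2) ^ k) y :=
    fun y hy => differentiableAt_id.mul
      ((differentiableOn_tsum_mul_pow hconv).differentiableAt_comp_sq hcρ hy)
  have hne : ∀ y ∈ sphere (0 : ℂ) c, y * ∑' k, d k * (y ^ 2) ^ k ≠ 0 := fun y hy =>
    mul_ne_zero (ne_zero_of_mem_sphere hc.ne' ⟨y, hy⟩)
      (hfz _ (norm_sq_le_of_mem_closedBall (sphere_subset_closedBall hy)))
  have hcont : ContinuousOn (fun y => y * ∑' k, d k * (y ^ 2) ^ k) (sphere 0 c) := fun y hy =>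
    (hdiff y (sphere_subset_closedBall hy)).continuousAt.continuousWithinAt
  have hL : L = (2 * ↑π * I)⁻¹ • circleFunctional c _ hc hcont hne :=
    LinearMap.ext_on_range (span_range_Rlp hdk) fun m => by
      rw [LinearMap.smul_apply, circleFunctional_apply,
        circleIntegral_leval_sq_Rlp_div hconv hc hcρ hfz, apply_Rlp_of_orthogonal hd0 hL1 horth]
      split_ifs
      · rw [smul_eq_mul, inv_mul_cancel₀ two_pi_I_ne_zero]
      · rw [smul_zero]
  exact LinearMap.congr_fun hL R

/-- If `𝐋` is a linear functional on Laurent polynomials with `𝐋 1 = 1` and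
`𝐋(R_n R_m) = 0` for `n ≠ m`, and `c > 0` satisfies `c² < ρ` and `f(w) ≠ 0` for `|w| ≤ c²`,
then `𝐋(R) = (1/(2πi)) ∮_{|y|=c} R(y²)/(y f(y²)) dy` for every Laurent polynomial `R`. -/
theorem stmt_6 (d : ℕ → ℂ) (hd0 : d 0 = 1) (hdk : ∀ k, d k ≠ 0)
    (ρ : ℝ≥0∞) (hρ : 0 < ρ)
    (hconv : ∀ w : ℂ, (‖w‖₊ : ℝ≥0∞) < ρ → Summable (fun k => d k * w ^ k))
    (L : LaurentPolynomial ℂ →ₗ[ℂ] ℂ) (hL1 : L 1 = 1)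
    (horth : ∀ n m : ℕ, n ≠ m → L (Rlp d n * Rlp d m) = 0)
    (c : ℝ) (hc : 0 < c) (hcρ : ENNReal.ofReal (c ^ 2) < ρ)
    (hfz : ∀ w : ℂ, ‖w‖ ≤ c ^ 2 → (∑' k, d k * w ^ k) ≠ 0)
    (R : LaurentPolynomial ℂ) :
    L R = (2 * ↑π * Complex.I)⁻¹ *
      ∮ y in C(0, c), leval (y ^ 2) R / (y * ∑' k, d k * (y ^ 2) ^ k) :=
  stmt_6_general d hd0 hdk ρ hconv L hL1 horth c hc hcρ hfz R
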